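/- Equipartition of energy: let s ≥ 0 and let (α,β) ∈ 𝒰₁ satisfy 𝒢_s(α,β) = g₀(s). Then s² f(β(t))² α'(t)² + β'(t)² = (1 − β(t))²/4 for almost every t ∈ ℝ. -/

import Mathlib

/-!
Stretch the tail of a minimizer: for `a ∈ ℝ` and `r > 0`, replacing `(α, β)` on `(a, ∞)` by
`t ↦ (α, β)(a + (t - a)/r)` stays in `𝒰₁`, multiplies the tail energy `K` of
`s² f(β)² α'² + β'²` on `(a, ∞)` by `1/r` and the tail energy `P` of `(1 - β)²/4` by `r`.
Since `g₀(s)` is finite, minimality of `r ↦ K/r + r P` at `r = 1` forces `K = P` for every `a`.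
Finite measures agreeing on all rays `(a, ∞)` coincide, so the two densities agree a.e.
-/

open MeasureTheory Set Filter
open scoped ENNReal

/-- Hypotheses on the functions `f` and `f₁` from Section 6.1 of the paper.
`f : [0,1] → [0,∞]` is real-valued, `C¹` and nondecreasing on `[0,1)` with `f(1) = ∞`,
`f(t) = 0` iff `t = 0`, and `f₁(s) = s·f(1−s)` (with `f₁(0) = ℓ`) is strictly decreasing,
`u ↦ f₁(√u)` is convex, and `f₁(s) = ℓ − ℓ₁ s + o(s)` as `s → 0⁺`. -/
structure FHyp (ℓ ℓ₁ : ℝ) (f : ℝ → ℝ≥0∞) (f₁ : ℝ → ℝ) : Prop where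
  hl : 0 < ℓ
  hl1 : 0 < ℓ₁
  freal : ∀ t ∈ Ico (0:ℝ) 1, f t ≠ ⊤
  fdiff : ∃ d : ℝ → ℝ, ContinuousOn d (Ico 0 1) ∧
    ∀ t ∈ Ico (0:ℝ) 1, HasDerivWithinAt (fun x => (f x).toReal) (d t) (Ico 0 1) t
  fmono : MonotoneOn (fun x => (f x).toReal) (Ico 0 1)
  fzero : ∀ t ∈ Icc (0:ℝ) 1, (f t = 0 ↔ t = 0)
  ftop : f 1 = ⊤
  hf₁ : ∀ s ∈ Ioc (0:ℝ) 1, f₁ s = s * (f (1 - s)).toReal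
  hf₁0 : f₁ 0 = ℓ
  f₁anti : StrictAntiOn f₁ (Icc 0 1)
  convexSqrt : ConvexOn ℝ (Icc 0 1) (fun u => f₁ (Real.sqrt u))
  lim0 : Tendsto (fun s => (f₁ s - ℓ + ℓ₁ * s) / s) (nhdsWithin 0 (Ioi 0)) (nhds 0)

/-- `u` is locally absolutely continuous on `ℝ` with a.e. derivative `u'`. -/
def LocAC (u u' : ℝ → ℝ) : Prop :=
  (∀ a b : ℝ, IntegrableOn u' (Icc a b)) ∧
  ∀ a t : ℝ, u t = u a + ∫ x in a..t, u' x

/-- Membership of the pair `(α, β)` (with a.e. derivatives `α', β'`) in the class `𝒰₁`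
of (6.8): `α' ∈ L¹(ℝ)`, `|∫ α'| = 1`, `0 ≤ β ≤ 1`, and `β(t) → 1` as `|t| → ∞`. -/
def MemU1 (α α' β β' : ℝ → ℝ) : Prop :=
  LocAC α α' ∧ LocAC β β' ∧
  Integrable α' ∧ |∫ t : ℝ, α' t| = 1 ∧
  (∀ t : ℝ, 0 ≤ β t ∧ β t ≤ 1) ∧
  Tendsto β atTop (nhds 1) ∧ Tendsto β atBot (nhds 1)

/-- The functional `𝒢_s` of (6.7), with values in `[0,∞]` and the convention `∞·0 = 0`. -/
noncomputable def Gfun (f : ℝ → ℝ≥0∞) (s : ℝ) (α' β β' : ℝ → ℝ) : ℝ≥0∞ :=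
  ∫⁻ t : ℝ, (ENNReal.ofReal (s ^ 2 * (α' t) ^ 2) * (f (β t)) ^ 2
    + ENNReal.ofReal ((1 - β t) ^ 2 / 4 + (β' t) ^ 2))

/-- The cohesive energy density `g₀` of pristine material, definition (6.6). -/
noncomputable def g0E (f : ℝ → ℝ≥0∞) (s : ℝ) : ℝ≥0∞ :=
  sInf {x | ∃ α α' β β' : ℝ → ℝ, MemU1 α α' β β' ∧ x = Gfun f s α' β β'}

lemma eq_of_forall_add_le_inv_mul_add_mul {p q : ℝ}
    (h : ∀ r : ℝ, 0 < r → p + q ≤ r⁻¹ * p + r * q) : p = q := by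
  have hmin : IsLocalMin (fun r : ℝ => r⁻¹ * p + r * q) 1 := by
    filter_upwards [lt_mem_nhds one_pos] with r hr
    simpa using h r hr
  have hderiv : HasDerivAt (fun r : ℝ => r⁻¹ * p + r * q) (-p + q) 1 := by
    simpa using ((hasDerivAt_inv (one_ne_zero (α := ℝ))).mul_const p).fun_add
      ((hasDerivAt_id (1 : ℝ)).mul_const q)
  linarith [hmin.hasDerivAt_eq_zero hderiv]

lemma ENNReal.eq_of_forall_add_le_inv_mul_add_mul {p q : ℝ≥0∞} (hp : p ≠ ∞) (hq : q ≠ ∞)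
    (h : ∀ r : ℝ, 0 < r → p + q ≤ ENNReal.ofReal r⁻¹ * p + ENNReal.ofReal r * q) : p = q := by
  refine (ENNReal.toReal_eq_toReal_iff' hp hq).1
    (_root_.eq_of_forall_add_le_inv_mul_add_mul fun r hr => ?_)
  have := ENNReal.toReal_mono (by finiteness) (h r hr)
  rwa [ENNReal.toReal_add hp hq, ENNReal.toReal_add (by finiteness) (by finiteness),
    ENNReal.toReal_mul, ENNReal.toReal_mul, ENNReal.toReal_ofReal (by positivity),
    ENNReal.toReal_ofReal hr.le] at this

lemma ae_eq_of_forall_setLIntegral_Ioi_eq {f g : ℝ → ℝ≥0∞} (hf : AEMeasurable f)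
    (hg : AEMeasurable g) (hfin : ∫⁻ t, f t ≠ ∞)
    (h : ∀ a, ∫⁻ t in Ioi a, f t = ∫⁻ t in Ioi a, g t) : f =ᵐ[volume] g := by
  have := isFiniteMeasure_withDensity hfin
  refine (withDensity_eq_iff hf hg hfin).1 (Measure.ext_of_Ici _ _ fun a => ?_)
  simp only [withDensity_apply _ measurableSet_Ici, setLIntegral_congr Ioi_ae_eq_Ici.symm, h]

lemma MonotoneOn.measurable_comp {a b : ℝ} (hab : a ≤ b) {g : ℝ → ℝ≥0∞}
    (hg : MonotoneOn g (Icc a b)) {β : ℝ → ℝ} (hβ : Measurable β) (hβab : ∀ t, β t ∈ Icc a b) :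
    Measurable fun t => g (β t) := by
  have hmono : Monotone fun x : Icc a b => g x := fun x y hxy => hg x.2 y.2 hxy
  convert (hmono.IccExtend (h := hab)).measurable.comp hβ using 1
  ext t
  exact (IccExtend_of_mem hab (fun x : Icc a b => g x) (hβab t)).symm

section Homothety

variable (a : ℝ) {r : ℝ}

lemma tendsto_homothety_atTop (hr : 0 < r) :
    Tendsto (AffineMap.homothety a r) atTop atTop := by
  have : Tendsto (fun t => r * (t + -a) + a) atTop atTop := tendsto_atTop_add_const_right _ a
    ((tendsto_atTop_add_const_right _ (-a) tendsto_id).const_mul_atTop hr)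
  refine this.congr fun t => ?_
  simp [AffineMap.homothety_apply, sub_eq_add_neg]

lemma measurableEmbedding_homothety (hr : r ≠ 0) :
    MeasurableEmbedding (AffineMap.homothety a r) :=
  (AffineEquiv.homothetyUnitsMulHom a (Units.mk0 r hr)).toContinuousAffineEquiv.toHomeomorph
    |>.measurableEmbedding

lemma map_homothety_volume (hr : r ≠ 0) :
    Measure.map (AffineMap.homothety a r) volume = ENNReal.ofReal |r⁻¹| • volume := by
  have : (AffineMap.homothety a r : ℝ → ℝ) = (· + (a - r * a)) ∘ (r * ·) := by
    ext t; simp [AffineMap.homothety_apply]; ring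
  rw [this, ← Measure.map_map (measurable_add_const _) (measurable_const_mul r),
    Real.map_volume_mul_left hr, Measure.map_smul, map_add_right_eq_self]

lemma homothety_preimage_Ioi (hr : 0 < r) : AffineMap.homothety a r ⁻¹' Ioi a = Ioi a := by
  ext t
  simp [AffineMap.homothety_apply, hr]

lemma map_homothety_inv_volume_restrict_Ioi (hr : 0 < r) :
    Measure.map (AffineMap.homothety a r⁻¹) (volume.restrict (Ioi a))
      = ENNReal.ofReal r • volume.restrict (Ioi a) := by
  rw [← homothety_preimage_Ioi a (inv_pos.2 hr),
    ← (measurableEmbedding_homothety a (inv_ne_zero hr.ne')).restrict_map,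
    map_homothety_volume a (inv_ne_zero hr.ne'), homothety_preimage_Ioi a (inv_pos.2 hr),
    Measure.restrict_smul, inv_inv, abs_of_pos hr]

lemma setLIntegral_Ioi_comp_homothety_inv (hr : 0 < r) (g : ℝ → ℝ≥0∞) :
    ∫⁻ t in Ioi a, g (AffineMap.homothety a r⁻¹ t) = ENNReal.ofReal r * ∫⁻ t in Ioi a, g t := by
  rw [← (measurableEmbedding_homothety a (inv_ne_zero hr.ne')).lintegral_map,
    map_homothety_inv_volume_restrict_Ioi a hr, lintegral_smul_measure, smul_eq_mul]

lemma setIntegral_Ioi_comp_homothety_inv (hr : 0 < r) (g : ℝ → ℝ) :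
    ∫ t in Ioi a, g (AffineMap.homothety a r⁻¹ t) = r * ∫ t in Ioi a, g t := by
  rw [← (measurableEmbedding_homothety a (inv_ne_zero hr.ne')).integral_map,
    map_homothety_inv_volume_restrict_Ioi a hr, integral_smul_measure,
    ENNReal.toReal_ofReal hr.le, smul_eq_mul]

lemma IntegrableOn.comp_homothety_inv_Ioi (hr : 0 < r) {g : ℝ → ℝ} (hg : IntegrableOn g (Ioi a)) :
    IntegrableOn (fun t => g (AffineMap.homothety a r⁻¹ t)) (Ioi a) := by
  refine (measurableEmbedding_homothety a (inv_ne_zero hr.ne')).integrable_map_iff.1 ?_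
  rw [map_homothety_inv_volume_restrict_Ioi a hr]
  exact hg.smul_measure ENNReal.ofReal_ne_top

end Homothety

namespace LocAC

variable {u u' v v' : ℝ → ℝ}

lemma intervalIntegrable (hu : LocAC u u') (a b : ℝ) : IntervalIntegrable u' volume a b :=
  (hu.1 _ _).intervalIntegrable

lemma of_intervalIntegrable (hint : ∀ a b, IntervalIntegrable u' volume a b) (a₀ : ℝ)
    (hftc : ∀ t, u t = u a₀ + ∫ x in a₀..t, u' x) : LocAC u u' := by
  refine ⟨fun a b => ((intervalIntegrable_iff' (by finiteness)).1 (hint a b)).mono_set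
    Icc_subset_uIcc, fun a t => ?_⟩
  rw [hftc t, hftc a, ← intervalIntegral.integral_add_adjacent_intervals (hint a₀ a) (hint a t)]
  ring

lemma continuous (hu : LocAC u u') : Continuous u := by
  rw [show u = fun t => u 0 + ∫ x in (0 : ℝ)..t, u' x from funext (hu.2 0)]
  exact continuous_const.add (intervalIntegral.continuous_primitive hu.intervalIntegrable 0)

lemma aemeasurable_deriv (hu : LocAC u u') : AEMeasurable u' :=
  (LocallyIntegrable.aestronglyMeasurable (locallyIntegrable_iff.2 fun _ hk =>
    (hu.1 _ _).mono_set hk.isBounded.subset_Icc_sInf_sSup)).aemeasurable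

lemma comp_homothety (hu : LocAC u u') (a : ℝ) {r : ℝ} (hr : r ≠ 0) :
    LocAC (fun t => u (AffineMap.homothety a r t))
      (fun t => r * u' (AffineMap.homothety a r t)) := by
  have happ : ∀ t, AffineMap.homothety a r t = r * t + (a - r * a) := fun t => by
    simp [AffineMap.homothety_apply]; ring
  simp only [happ]
  refine of_intervalIntegrable (fun c t => ?_) 0 (fun t => ?_)
  · have := ((hu.intervalIntegrable (r * c + (a - r * a)) (r * t + (a - r * a))).comp_add_right
      (a - r * a)).comp_mul_left (c := r)
    simpa [hr] using this.const_mul r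
  · rw [intervalIntegral.integral_const_mul, intervalIntegral.integral_comp_mul_add _ hr,
      smul_eq_mul, ← mul_assoc, mul_inv_cancel₀ hr, one_mul]
    exact hu.2 _ _

lemma piecewise_Iic (hu : LocAC u u') (hv : LocAC v v') {a : ℝ} (ha : u a = v a) :
    LocAC ((Iic a).piecewise u v) ((Iic a).piecewise u' v') := by
  have hint : ∀ c d, IntegrableOn ((Iic a).piecewise u' v') (Icc c d) := fun c d =>
    Integrable.piecewise measurableSet_Iic (hu.1 c d).integrable.restrict
      (hv.1 c d).integrable.restrict
  refine of_intervalIntegrable (fun c d => (hint _ _).intervalIntegrable) a fun t => ?_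
  rw [piecewise_eq_of_mem _ _ _ (self_mem_Iic (a := a))]
  rcases le_or_gt t a with hta | hat
  · rw [piecewise_eq_of_mem _ _ _ (mem_Iic.2 hta), hu.2 a t]
    congr 1
    refine intervalIntegral.integral_congr fun x hx => ?_
    rw [uIcc_of_ge hta] at hx
    exact (piecewise_eq_of_mem _ _ _ (mem_Iic.2 hx.2)).symm
  · rw [piecewise_eq_of_notMem _ _ _ (notMem_Iic.2 hat), ha, hv.2 a t]
    congr 1
    refine intervalIntegral.integral_congr_ae (.of_forall fun x hx => ?_)
    rw [uIoc_of_le hat.le] at hx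
    exact (piecewise_eq_of_notMem _ _ _ (notMem_Iic.2 hx.1)).symm

end LocAC

noncomputable def stretchRight (a r : ℝ) (u : ℝ → ℝ) : ℝ → ℝ :=
  (Iic a).piecewise u fun t => u (AffineMap.homothety a r⁻¹ t)

noncomputable def stretchRightDeriv (a r : ℝ) (u' : ℝ → ℝ) : ℝ → ℝ :=
  (Iic a).piecewise u' fun t => r⁻¹ * u' (AffineMap.homothety a r⁻¹ t)

lemma LocAC.stretchRight {u u' : ℝ → ℝ} (hu : LocAC u u') (a : ℝ) {r : ℝ} (hr : r ≠ 0) :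
    LocAC (stretchRight a r u) (stretchRightDeriv a r u') :=
  hu.piecewise_Iic (hu.comp_homothety a (inv_ne_zero hr)) (by simp)

section Stretch

variable {a r : ℝ} {u : ℝ → ℝ} {t : ℝ}

lemma stretchRight_of_le (ht : t ≤ a) : stretchRight a r u t = u t :=
  piecewise_eq_of_mem _ _ _ ht

lemma stretchRight_of_lt (ht : a < t) :
    stretchRight a r u t = u (AffineMap.homothety a r⁻¹ t) :=
  piecewise_eq_of_notMem _ _ _ (notMem_Iic.2 ht)

lemma stretchRightDeriv_of_le (ht : t ≤ a) : stretchRightDeriv a r u t = u t :=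
  piecewise_eq_of_mem _ _ _ ht

lemma stretchRightDeriv_of_lt (ht : a < t) :
    stretchRightDeriv a r u t = r⁻¹ * u (AffineMap.homothety a r⁻¹ t) :=
  piecewise_eq_of_notMem _ _ _ (notMem_Iic.2 ht)

lemma integrableOn_compl_Iic_inv_mul_comp_homothety (hr : 0 < r) (hu : Integrable u) :
    IntegrableOn (fun t => r⁻¹ * u (AffineMap.homothety a r⁻¹ t)) (Iic a)ᶜ := by
  rw [compl_Iic]
  exact (IntegrableOn.comp_homothety_inv_Ioi a hr hu.integrableOn).const_mul r⁻¹

lemma integrable_stretchRightDeriv (hr : 0 < r) (hu : Integrable u) :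
    Integrable (stretchRightDeriv a r u) :=
  Integrable.piecewise measurableSet_Iic hu.integrableOn
    (integrableOn_compl_Iic_inv_mul_comp_homothety hr hu)

lemma integral_stretchRightDeriv (hr : 0 < r) (hu : Integrable u) :
    ∫ t, stretchRightDeriv a r u t = ∫ t, u t := by
  rw [stretchRightDeriv, integral_piecewise measurableSet_Iic hu.integrableOn
      (integrableOn_compl_Iic_inv_mul_comp_homothety hr hu), compl_Iic, integral_const_mul,
    setIntegral_Ioi_comp_homothety_inv a hr, inv_mul_cancel_left₀ hr.ne', ← compl_Iic,
    integral_add_compl measurableSet_Iic hu]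

end Stretch

lemma MemU1.stretchRight {α α' β β' : ℝ → ℝ} (hU : MemU1 α α' β β') (a : ℝ) {r : ℝ}
    (hr : 0 < r) :
    MemU1 (stretchRight a r α) (stretchRightDeriv a r α') (stretchRight a r β)
      (stretchRightDeriv a r β') := by
  obtain ⟨hα, hβ, hint, hnorm, hbd, htop, hbot⟩ := hU
  refine ⟨hα.stretchRight a hr.ne', hβ.stretchRight a hr.ne', integrable_stretchRightDeriv hr hint,
    by rwa [integral_stretchRightDeriv hr hint], fun t => ?_, ?_, ?_⟩
  · rcases le_or_gt t a with ht | ht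
    · rw [stretchRight_of_le ht]; exact hbd t
    · rw [stretchRight_of_lt ht]; exact hbd _
  · refine (htop.comp (tendsto_homothety_atTop a (inv_pos.2 hr))).congr' ?_
    filter_upwards [eventually_gt_atTop a] with t ht
    exact (stretchRight_of_lt ht).symm
  · refine hbot.congr' ?_
    filter_upwards [eventually_le_atBot a] with t ht
    exact (stretchRight_of_le ht).symm

noncomputable def kineticDensity (f : ℝ → ℝ≥0∞) (s : ℝ) (α' β β' : ℝ → ℝ) (t : ℝ) : ℝ≥0∞ :=
  ENNReal.ofReal (s ^ 2 * (α' t) ^ 2) * (f (β t)) ^ 2 + ENNReal.ofReal ((β' t) ^ 2)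

noncomputable def potentialDensity (β : ℝ → ℝ) (t : ℝ) : ℝ≥0∞ :=
  ENNReal.ofReal ((1 - β t) ^ 2 / 4)

section Energy

variable {f : ℝ → ℝ≥0∞} {s a r : ℝ} {α' β β' : ℝ → ℝ}

lemma Gfun_eq_lintegral (f : ℝ → ℝ≥0∞) (s : ℝ) (α' β β' : ℝ → ℝ) :
    Gfun f s α' β β' = ∫⁻ t, (kineticDensity f s α' β β' t + potentialDensity β t) := by
  refine lintegral_congr fun t => ?_
  rw [kineticDensity, potentialDensity, ENNReal.ofReal_add (by positivity) (by positivity)]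
  ring

lemma measurable_potentialDensity (hβ : Continuous β) : Measurable (potentialDensity β) :=
  ENNReal.measurable_ofReal.comp (by fun_prop)

lemma aemeasurable_kineticDensity (hf : Measurable fun t => f (β t)) (hα' : AEMeasurable α')
    (hβ' : AEMeasurable β') : AEMeasurable (kineticDensity f s α' β β') := by
  refine .add ?_ (ENNReal.measurable_ofReal.comp_aemeasurable (hβ'.pow_const 2))
  exact (ENNReal.measurable_ofReal.comp_aemeasurable ((hα'.pow_const 2).const_mul _)).mul
    (hf.pow_const 2).aemeasurable

lemma kineticDensity_stretchRight_of_lt {t : ℝ} (ht : a < t) :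
    kineticDensity f s (stretchRightDeriv a r α') (stretchRight a r β) (stretchRightDeriv a r β') t
      = ENNReal.ofReal (r⁻¹ ^ 2) * kineticDensity f s α' β β' (AffineMap.homothety a r⁻¹ t) := by
  simp only [kineticDensity, stretchRight_of_lt ht, stretchRightDeriv_of_lt ht]
  rw [mul_add, ← mul_assoc, ← ENNReal.ofReal_mul (by positivity),
    ← ENNReal.ofReal_mul (by positivity)]
  ring_nf

lemma potentialDensity_stretchRight_of_lt {t : ℝ} (ht : a < t) :
    potentialDensity (stretchRight a r β) t = potentialDensity β (AffineMap.homothety a r⁻¹ t) := by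
  rw [potentialDensity, stretchRight_of_lt ht, potentialDensity]

lemma setLIntegral_Ioi_stretchRight (hr : 0 < r) (hβ : Continuous β) :
    ∫⁻ t in Ioi a, (kineticDensity f s (stretchRightDeriv a r α') (stretchRight a r β)
        (stretchRightDeriv a r β') t + potentialDensity (stretchRight a r β) t)
      = ENNReal.ofReal r⁻¹ * (∫⁻ t in Ioi a, kineticDensity f s α' β β' t)
        + ENNReal.ofReal r * ∫⁻ t in Ioi a, potentialDensity β t := by
  set c := ENNReal.ofReal (r⁻¹ ^ 2)
  calc _ = ∫⁻ t in Ioi a, (fun u => c * kineticDensity f s α' β β' u + potentialDensity β u)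
          (AffineMap.homothety a r⁻¹ t) := by
        refine setLIntegral_congr_fun measurableSet_Ioi fun t ht => ?_
        rw [kineticDensity_stretchRight_of_lt ht, potentialDensity_stretchRight_of_lt ht]
    _ = ENNReal.ofReal r * (c * (∫⁻ t in Ioi a, kineticDensity f s α' β β' t)
          + ∫⁻ t in Ioi a, potentialDensity β t) := by
        rw [setLIntegral_Ioi_comp_homothety_inv a hr
            (fun u => c * kineticDensity f s α' β β' u + potentialDensity β u),
          lintegral_add_right _ (measurable_potentialDensity hβ),
          lintegral_const_mul' _ _ ENNReal.ofReal_ne_top]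
    _ = _ := by
        rw [mul_add, ← mul_assoc, ← ENNReal.ofReal_mul hr.le]
        congr 3
        field_simp

lemma Gfun_stretchRight (hr : 0 < r) (hβ : Continuous β) :
    Gfun f s (stretchRightDeriv a r α') (stretchRight a r β) (stretchRightDeriv a r β')
      = (∫⁻ t in Iic a, (kineticDensity f s α' β β' t + potentialDensity β t))
        + (ENNReal.ofReal r⁻¹ * (∫⁻ t in Ioi a, kineticDensity f s α' β β' t)
          + ENNReal.ofReal r * ∫⁻ t in Ioi a, potentialDensity β t) := by
  rw [Gfun_eq_lintegral, ← lintegral_add_compl _ (measurableSet_Iic (a := a)), compl_Iic,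
    setLIntegral_Ioi_stretchRight hr hβ]
  congr 1
  refine setLIntegral_congr_fun measurableSet_Iic fun t ht => ?_
  simp only [kineticDensity, potentialDensity, stretchRight_of_le ht,
    stretchRightDeriv_of_le ht]

end Energy

lemma setLIntegral_Ioi_kineticDensity_eq_of_minimizer {f : ℝ → ℝ≥0∞} {s : ℝ}
    {α α' β β' : ℝ → ℝ} (hU : MemU1 α α' β β') (hmin : Gfun f s α' β β' = g0E f s)
    (hfin : g0E f s ≠ ∞) (a : ℝ) :
    ∫⁻ t in Ioi a, kineticDensity f s α' β β' t = ∫⁻ t in Ioi a, potentialDensity β t := by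
  have hβ : Continuous β := hU.2.1.continuous
  set I := ∫⁻ t in Iic a, (kineticDensity f s α' β β' t + potentialDensity β t)
  set K := ∫⁻ t in Ioi a, kineticDensity f s α' β β' t
  set P := ∫⁻ t in Ioi a, potentialDensity β t
  have hsplit : Gfun f s α' β β' = I + (K + P) := by
    rw [Gfun_eq_lintegral, ← lintegral_add_compl _ (measurableSet_Iic (a := a)), compl_Iic]
    exact congrArg (I + ·) (lintegral_add_right _ (measurable_potentialDensity hβ))
  have hIKP : I + (K + P) ≠ ∞ := hsplit ▸ hmin ▸ hfin
  have hKP : K + P ≠ ∞ := ne_top_of_le_ne_top hIKP le_add_self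
  refine ENNReal.eq_of_forall_add_le_inv_mul_add_mul (ne_top_of_le_ne_top hKP le_self_add)
    (ne_top_of_le_ne_top hKP le_add_self) fun r hr => ?_
  refine (ENNReal.add_le_add_iff_left (ne_top_of_le_ne_top hIKP le_self_add)).1 ?_
  rw [← hsplit, hmin, ← Gfun_stretchRight hr hβ]
  exact sInf_le ⟨_, _, _, _, hU.stretchRight a hr, rfl⟩

lemma memU1_indicator_gaussian :
    MemU1 (fun t => ∫ x in (0 : ℝ)..t, (Icc (0 : ℝ) 1).indicator 1 x)
      ((Icc (0 : ℝ) 1).indicator 1)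
      (fun t => 1 - Real.exp (-t ^ 2) / 2) (fun t => t * Real.exp (-t ^ 2)) := by
  have hint : Integrable ((Icc (0 : ℝ) 1).indicator 1) :=
    (integrable_indicator_iff measurableSet_Icc).2 (integrableOn_const (C := (1 : ℝ)) (by simp))
  have hderiv : ∀ t : ℝ,
      HasDerivAt (fun t => 1 - Real.exp (-t ^ 2) / 2) (t * Real.exp (-t ^ 2)) t := fun t => by
      refine ((((hasDerivAt_pow 2 t).fun_neg).exp.div_const 2).const_sub 1).congr_deriv ?_
      push_cast; ring
  have hcont : Continuous fun t : ℝ => t * Real.exp (-t ^ 2) := by fun_prop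
  have hexp : ∀ t : ℝ, Real.exp (-t ^ 2) ≤ 1 := fun t =>
    Real.exp_le_one_iff.2 (neg_nonpos.2 (sq_nonneg t))
  have hlim : ∀ l : Filter ℝ, Tendsto (fun t : ℝ => t ^ 2) l atTop →
      Tendsto (fun t => 1 - Real.exp (-t ^ 2) / 2) l (nhds 1) := fun l hl => by
    simpa using tendsto_const_nhds.sub
      ((Real.tendsto_exp_atBot.comp (tendsto_neg_atTop_atBot.comp hl)).div_const 2)
  refine ⟨.of_intervalIntegrable (fun a b => hint.intervalIntegrable) 0 fun t => by simp,
    .of_intervalIntegrable (fun a b => hcont.intervalIntegrable a b) 0 fun t => ?_, hint,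
    by simp [integral_indicator_one measurableSet_Icc], fun t => ⟨?_, ?_⟩,
    hlim _ (tendsto_pow_atTop two_ne_zero), hlim _ ?_⟩
  · rw [intervalIntegral.integral_eq_sub_of_hasDerivAt (fun x _ => hderiv x)
      (hcont.intervalIntegrable _ _)]
    ring
  · linarith [hexp t]
  · linarith [Real.exp_pos (-t ^ 2)]
  · simpa [Function.comp_def] using
      (tendsto_pow_atTop two_ne_zero).comp (tendsto_abs_atBot_atTop (G := ℝ))

lemma integrable_gaussian_energyDensity :
    Integrable fun t : ℝ =>
      (1 - (1 - Real.exp (-t ^ 2) / 2)) ^ 2 / 4 + (t * Real.exp (-t ^ 2)) ^ 2 := by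
  have h1 : Integrable fun t : ℝ => Real.exp (-2 * t ^ 2) := integrable_exp_neg_mul_sq two_pos
  have h2 : Integrable fun t : ℝ => t ^ (2 : ℝ) * Real.exp (-2 * t ^ 2) :=
    integrable_rpow_mul_exp_neg_mul_sq two_pos (by norm_num)
  refine ((h1.div_const 16).add h2).congr (.of_forall fun t => ?_)
  have : Real.exp (-t ^ 2) ^ 2 = Real.exp (-2 * t ^ 2) := by rw [sq, ← Real.exp_add]; ring_nf
  simp only [Pi.add_apply, Real.rpow_two, ← this]
  ring

lemma g0E_lt_top {f : ℝ → ℝ≥0∞} (hmono : MonotoneOn f (Icc 0 1))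
    (hfin : ∀ t ∈ Ico (0 : ℝ) 1, f t ≠ ∞) (s : ℝ) : g0E f s < ∞ := by
  set β : ℝ → ℝ := fun t => 1 - Real.exp (-t ^ 2) / 2
  obtain ⟨-, -, -, -, hβmem, -, -⟩ := memU1_indicator_gaussian
  have hβ1 : β 1 < 1 := by simp [β, Real.exp_pos]
  have hβle : ∀ t ∈ Icc (0 : ℝ) 1, β t ≤ β 1 := fun t ht => by
    have : t ^ 2 ≤ 1 ^ 2 := pow_le_pow_left₀ ht.1 ht.2 2
    simp only [β]
    gcongr
  have hkin : ∀ t, ENNReal.ofReal (s ^ 2 * (Icc (0 : ℝ) 1).indicator 1 t ^ 2) * f (β t) ^ 2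
      ≤ (Icc (0 : ℝ) 1).indicator (fun _ => ENNReal.ofReal (s ^ 2) * f (β 1) ^ 2) t := fun t => by
    by_cases ht : t ∈ Icc (0 : ℝ) 1
    · simp only [indicator_of_mem ht, Pi.one_apply, one_pow, mul_one]
      gcongr
      exact hmono (hβmem t) (hβmem 1) (hβle t ht)
    · simp [indicator_of_notMem ht]
  calc g0E f s ≤ Gfun f s ((Icc (0 : ℝ) 1).indicator 1) β (fun t => t * Real.exp (-t ^ 2)) :=
        sInf_le ⟨_, _, _, _, memU1_indicator_gaussian, rfl⟩
    _ < ∞ := ?_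
  rw [Gfun, lintegral_add_right _ (by fun_prop)]
  refine ENNReal.add_lt_top.2 ⟨(lintegral_mono hkin).trans_lt ?_,
    integrable_gaussian_energyDensity.lintegral_lt_top⟩
  rw [lintegral_indicator_const measurableSet_Icc, Real.volume_Icc]
  have := hfin (β 1) ⟨(hβmem 1).1, hβ1⟩
  finiteness

lemma FHyp.monotoneOn {ℓ ℓ₁ : ℝ} {f : ℝ → ℝ≥0∞} {f₁ : ℝ → ℝ} (hf : FHyp ℓ ℓ₁ f f₁) :
    MonotoneOn f (Icc 0 1) := by
  intro x hx y hy hxy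
  rcases hy.2.lt_or_eq with hy1 | rfl
  · have hy' : y ∈ Ico (0 : ℝ) 1 := ⟨hy.1, hy1⟩
    have hx' : x ∈ Ico (0 : ℝ) 1 := ⟨hx.1, hxy.trans_lt hy1⟩
    rw [← ENNReal.ofReal_toReal (hf.freal x hx'), ← ENNReal.ofReal_toReal (hf.freal y hy')]
    exact ENNReal.ofReal_le_ofReal (hf.fmono hx' hy' hxy)
  · rw [hf.ftop]
    exact le_top

theorem stmt_15 (ℓ ℓ₁ : ℝ) (f : ℝ → ℝ≥0∞) (f₁ : ℝ → ℝ) (hf : FHyp ℓ ℓ₁ f f₁)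
    (s : ℝ)
    (α α' β β' : ℝ → ℝ) (hU : MemU1 α α' β β')
    (hmin : Gfun f s α' β β' = g0E f s) :
    ∀ᵐ t : ℝ ∂volume,
      ENNReal.ofReal (s ^ 2 * (α' t) ^ 2) * (f (β t)) ^ 2
          + ENNReal.ofReal ((β' t) ^ 2)
        = ENNReal.ofReal ((1 - β t) ^ 2 / 4) := by
  have hβ : LocAC β β' := hU.2.1
  have hfin : g0E f s ≠ ∞ := (g0E_lt_top hf.monotoneOn hf.freal s).ne
  have hfβ : Measurable fun t => f (β t) :=
    hf.monotoneOn.measurable_comp zero_le_one hβ.continuous.measurable hU.2.2.2.2.1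
  have hkin_fin : ∫⁻ t, kineticDensity f s α' β β' t ≠ ∞ := by
    refine ne_top_of_le_ne_top (hmin ▸ hfin) ?_
    rw [Gfun_eq_lintegral]
    exact lintegral_mono fun t => le_self_add
  exact ae_eq_of_forall_setLIntegral_Ioi_eq
    (aemeasurable_kineticDensity hfβ hU.2.2.1.aemeasurable hβ.aemeasurable_deriv)
    (measurable_potentialDensity hβ.continuous).aemeasurable hkin_fin
    (setLIntegral_Ioi_kineticDensity_eq_of_minimizer hU hmin hfin)
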